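/- arXiv:2603.29703 — 4 statements merged into one kernel-verified Lean document; each statement's English description precedes it below -/
import Mathlib

section
/- Let P and X be metric spaces and F : P ⇉ X a set-valued map with (p₀,x₀) ∈ graph F. Then F has the Aubin property around (p₀,x₀) if and only if the scalar function (p,x) ↦ dist(x, F(p)) is Lipschitz continuous on some neighbourhood of (p₀,x₀) (with values in [0,∞], finite on that neighbourhood). -/
/-!
Aubin ⇒ Lipschitz: to compare `dist(x₁, F p₁)` with `dist(x₂, F p₂)`, pick `y ∈ F p₂` almost
nearest to `x₂`. Since `dist(x₀, F p) ≤ ℓ·d(p₀, p)`, such `y` stays within `(ℓ + 2) r` of `x₀`,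
so on a ball of radius `r ≤ η / (ℓ + 2)` the Aubin inclusion applies to `y` and gives
`dist(x₁, F p₁) ≤ d(x₁, x₂) + dist(x₂, F p₂) + ℓ·d(p₁, p₂)`.

Lipschitz ⇒ Aubin: for `x ∈ F p₁` compare `(p₂, x)` with `(p₁, x)`, where the distance vanishes.
-/

open Metric Set

theorem Metric.infEDist_le_edist_add_infEDist_add_of_forall_near {α : Type*}
    [PseudoEMetricSpace α] {S T : Set α} {x x' : α} {c d : ENNReal}
    (hxS : infEDist x S < d) (hST : ∀ y ∈ S, edist x y < d → infEDist y T ≤ c) :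
    infEDist x' T ≤ edist x' x + infEDist x S + c := by
  refine ENNReal.le_of_forall_pos_le_add fun ε hε _ => ?_
  have hxS_lt : infEDist x S < min (infEDist x S + ε) d :=
    lt_min (ENNReal.lt_add_right hxS.ne_top (by simpa using hε.ne')) hxS
  obtain ⟨y, hyS, hxy⟩ := infEDist_lt_iff.mp hxS_lt
  calc infEDist x' T ≤ edist x' y + infEDist y T := infEDist_le_edist_add_infEDist
    _ ≤ edist x' x + (infEDist x S + ε) + c := by
      gcongr
      · exact (edist_triangle x' x y).trans (by gcongr; exact hxy.le.trans (min_le_left _ _))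
      · exact hST y hyS (hxy.trans_le (min_le_right _ _))
    _ = edist x' x + infEDist x S + c + ε := by ring

section

variable {P X : Type*} [PseudoMetricSpace P] [PseudoMetricSpace X]

def HasAubinWith (F : P → Set X) (p₀ : P) (x₀ : X) (δ η ℓ : ℝ) : Prop :=
  ∀ p₁ ∈ closedBall p₀ δ, ∀ p₂ ∈ closedBall p₀ δ,
    F p₁ ∩ closedBall x₀ η ⊆ {x | infEDist x (F p₂) ≤ ENNReal.ofReal (ℓ * dist p₁ p₂)}

/-- Measured in the sum metric on `P × X`; Mathlib's product instance, and hence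
`LipschitzOnWith`, uses the max metric. -/
def InfEDistLipschitzOn (F : P → Set X) (s : Set (P × X)) (ℓ : ℝ) : Prop :=
  ∀ q₁ ∈ s, ∀ q₂ ∈ s, infEDist q₁.2 (F q₁.1) ≤
    infEDist q₂.2 (F q₂.1) + ENNReal.ofReal (ℓ * (dist q₁.1 q₂.1 + dist q₁.2 q₂.2))

namespace HasAubinWith

variable {F : P → Set X} {p₀ : P} {x₀ : X} {δ η ℓ : ℝ}

theorem infEDist_le (h : HasAubinWith F p₀ x₀ δ η ℓ) (hx₀ : x₀ ∈ F p₀) (hδ : 0 ≤ δ)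
    (hη : 0 ≤ η) (hℓ : 0 ≤ ℓ) {p : P} (hp : p ∈ closedBall p₀ δ) (x : X) :
    infEDist x (F p) ≤ ENNReal.ofReal (dist x x₀ + ℓ * dist p₀ p) := by
  rw [ENNReal.ofReal_add dist_nonneg (by positivity), ← edist_dist]
  exact infEDist_le_edist_add_infEDist.trans
    (add_le_add le_rfl (h p₀ (mem_closedBall_self hδ) p hp ⟨hx₀, mem_closedBall_self hη⟩))

theorem infEDist_le_infEDist_add (h : HasAubinWith F p₀ x₀ δ η ℓ) (hx₀ : x₀ ∈ F p₀)
    (hℓ : 0 ≤ ℓ) {r : ℝ} (hr : 0 < r) (hrδ : r ≤ δ) (hrη : (ℓ + 2) * r ≤ η)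
    {p₁ p₂ : P} {x₁ x₂ : X} (hp₁ : dist p₁ p₀ < r) (hp₂ : dist p₂ p₀ < r)
    (hx₂ : dist x₂ x₀ < r) :
    infEDist x₁ (F p₁) ≤
      infEDist x₂ (F p₂) + ENNReal.ofReal ((ℓ + 1) * (dist p₁ p₂ + dist x₁ x₂)) := by
  have hδ : 0 ≤ δ := hr.le.trans hrδ
  have hball {p : P} (hp : dist p p₀ < r) : p ∈ closedBall p₀ δ := hp.le.trans hrδ
  have hx₂S : infEDist x₂ (F p₂) < ENNReal.ofReal ((ℓ + 1) * r) := by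
    refine (HasAubinWith.infEDist_le h hx₀ hδ (by nlinarith) hℓ (hball hp₂) x₂).trans_lt ?_
    rw [ENNReal.ofReal_lt_ofReal_iff (by positivity), dist_comm p₀]
    nlinarith
  have hST : ∀ y ∈ F p₂, edist x₂ y < ENNReal.ofReal ((ℓ + 1) * r) →
      infEDist y (F p₁) ≤ ENNReal.ofReal (ℓ * dist p₂ p₁) := by
    intro y hy hx₂y
    refine h p₂ (hball hp₂) p₁ (hball hp₁) ⟨hy, ?_⟩
    have hx₂y := edist_lt_ofReal.mp hx₂y
    rw [mem_closedBall]
    linarith [dist_triangle y x₂ x₀, dist_comm x₂ y]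
  calc infEDist x₁ (F p₁)
      ≤ edist x₁ x₂ + infEDist x₂ (F p₂) + ENNReal.ofReal (ℓ * dist p₂ p₁) :=
        infEDist_le_edist_add_infEDist_add_of_forall_near hx₂S hST
    _ = infEDist x₂ (F p₂) + ENNReal.ofReal (dist x₁ x₂ + ℓ * dist p₁ p₂) := by
      rw [ENNReal.ofReal_add dist_nonneg (by positivity), edist_dist, dist_comm p₂]; ring
    _ ≤ infEDist x₂ (F p₂) + ENNReal.ofReal ((ℓ + 1) * (dist p₁ p₂ + dist x₁ x₂)) := by
      gcongr
      nlinarith [dist_nonneg (x := p₁) (y := p₂), dist_nonneg (x := x₁) (y := x₂)]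

theorem infEDistLipschitzOn (h : HasAubinWith F p₀ x₀ δ η ℓ) (hx₀ : x₀ ∈ F p₀) (hℓ : 0 ≤ ℓ)
    {r : ℝ} (hr : 0 < r) (hrδ : r ≤ δ) (hrη : (ℓ + 2) * r ≤ η) :
    InfEDistLipschitzOn F (ball (p₀, x₀) r) (ℓ + 1) := by
  rintro ⟨p₁, x₁⟩ hq₁ ⟨p₂, x₂⟩ hq₂
  rw [← ball_prod_same] at hq₁ hq₂
  exact h.infEDist_le_infEDist_add hx₀ hℓ hr hrδ hrη hq₁.1 hq₂.1 hq₂.2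

end HasAubinWith

theorem InfEDistLipschitzOn.hasAubinWith {F : P → Set X} {p₀ : P} {x₀ : X} {r ℓ : ℝ}
    (h : InfEDistLipschitzOn F (ball (p₀, x₀) r) ℓ) (hr : 0 < r) :
    HasAubinWith F p₀ x₀ (r / 2) (r / 2) ℓ := by
  intro p₁ hp₁ p₂ hp₂ x ⟨hx, hxη⟩
  have hmem {p : P} (hp : p ∈ closedBall p₀ (r / 2)) : (p, x) ∈ ball (p₀, x₀) r :=
    closedBall_subset_ball (half_lt_self hr) (closedBall_prod_same p₀ x₀ _ ▸ ⟨hp, hxη⟩)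
  simpa [infEDist_zero_of_mem hx, dist_comm p₂] using h _ (hmem hp₂) _ (hmem hp₁)

end

theorem aubin_iff_dist_locally_lipschitz
    {P : Type*} [MetricSpace P] {X : Type*} [MetricSpace X]
    (F : P → Set X) (p₀ : P) (x₀ : X) (hx₀ : x₀ ∈ F p₀) :
    (∃ δ > (0:ℝ), ∃ η > (0:ℝ), ∃ ℓ > (0:ℝ),
      ∀ p₁ ∈ closedBall p₀ δ, ∀ p₂ ∈ closedBall p₀ δ,
        F p₁ ∩ closedBall x₀ η ⊆
          {x | EMetric.infEdist x (F p₂) ≤ ENNReal.ofReal (ℓ * dist p₁ p₂)})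
    ↔ (∃ r > (0:ℝ), ∃ ℓ' > (0:ℝ),
        (∀ q ∈ ball (p₀, x₀) r, EMetric.infEdist q.2 (F q.1) ≠ ⊤) ∧
        (∀ q₁ ∈ ball (p₀, x₀) r, ∀ q₂ ∈ ball (p₀, x₀) r,
          EMetric.infEdist q₁.2 (F q₁.1) ≤ EMetric.infEdist q₂.2 (F q₂.1) +
            ENNReal.ofReal (ℓ' * (dist q₁.1 q₂.1 + dist q₁.2 q₂.2)))) := by
  constructor
  · rintro ⟨δ, hδ, η, hη, ℓ, hℓ, h⟩
    set r := min δ (η / (ℓ + 2))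
    have hr : 0 < r := lt_min hδ (by positivity)
    have hrδ : r ≤ δ := min_le_left _ _
    have hrη : (ℓ + 2) * r ≤ η := (le_div_iff₀' (by positivity)).mp (min_le_right _ _)
    refine ⟨r, hr, ℓ + 1, by positivity, fun q hq => ?_,
      HasAubinWith.infEDistLipschitzOn h hx₀ hℓ.le hr hrδ hrη⟩
    have hq₁ : q.1 ∈ closedBall p₀ δ :=
      (mem_ball.mp (ball_prod_same p₀ x₀ r ▸ hq).1).le.trans hrδ
    exact ne_top_of_le_ne_top ENNReal.ofReal_ne_top
      (HasAubinWith.infEDist_le h hx₀ hδ.le hη.le hℓ.le hq₁ q.2)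
  · rintro ⟨r, hr, ℓ', hℓ', -, hLip⟩
    exact ⟨r / 2, half_pos hr, r / 2, half_pos hr, ℓ', hℓ',
      InfEDistLipschitzOn.hasAubinWith hLip hr⟩
end

section
/- Let X be a Banach space and φ : X → ℝ a continuous convex function with {x : φ(x) > 0} ≠ ∅. Suppose τ := inf { ‖x*‖ : x* ∈ ∂φ(x), x ∈ X, φ(x) > 0 } > 0, where ∂φ(x) is the Moreau–Rockafellar subdifferential. Then the sublevel set {x : φ(x) ≤ 0} is nonempty and dist(x, {φ ≤ 0}) ≤ φ(x)/τ for every x with φ(x) > 0. -/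
open Metric Set Filter Topology

lemma exists_subgradient_of_local_lb
    {X : Type*} [NormedAddCommGroup X] [NormedSpace ℝ X]
    (φ : X → ℝ) (hconv : ConvexOn ℝ univ φ) (y : X) {c δ : ℝ} (hc : 0 ≤ c) (hδ : 0 < δ)
    (hlb : ∀ z, dist z y < δ → φ y - c * dist z y ≤ φ z) :
    ∃ xs : StrongDual ℝ X, (∀ z, xs (z - y) ≤ φ z - φ y) ∧ ‖xs‖ ≤ c := by
  classical
  set Q : X → ℝ → ℝ := fun d t => (φ (y + t • d) - φ y) / t with hQdef
  have Qmono : ∀ d, ∀ s t : ℝ, 0 < s → s ≤ t → Q d s ≤ Q d t := by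
    intro d s t hs hst
    have ht : 0 < t := hs.trans_le hst
    have hpt : (1 - s/t) • y + (s/t) • (y + t • d) = y + s • d := by
      rw [smul_add, smul_smul, div_mul_cancel₀ _ ht.ne']
      module
    have hineq : φ (y + s • d) ≤ (1 - s/t) * φ y + (s/t) * φ (y + t • d) := by
      have hA : (0:ℝ) ≤ 1 - s/t := by
        rw [sub_nonneg]
        exact (div_le_one ht).2 hst
      have hB : (0:ℝ) ≤ s/t := by positivity
      have hAB : (1 - s/t) + s/t = 1 := by ring
      have h := hconv.2 (mem_univ y) (mem_univ (y + t • d)) hA hB hAB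
      rwa [hpt] at h
    rw [hQdef]
    simp only
    rw [div_le_div_iff₀ hs ht]
    have h2 : t * φ (y + s • d) ≤ t * ((1 - s/t) * φ y + (s/t) * φ (y + t • d)) :=
      mul_le_mul_of_nonneg_left hineq ht.le
    have h3 : t * ((1 - s/t) * φ y + (s/t) * φ (y + t • d))
        = (t - s) * φ y + s * φ (y + t • d) := by
      field_simp
    nlinarith [h2, h3]
  have Qlb : ∀ d, ∀ t : ℝ, 0 < t → -(c * ‖d‖) ≤ Q d t := by
    intro d t ht
    rcases eq_or_ne d 0 with rfl | hd
    · simp [hQdef, ht.ne']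
    · have hdn : 0 < ‖d‖ := norm_pos_iff.2 hd
      set t₀ : ℝ := min t (δ / (2 * ‖d‖)) with ht₀def
      have ht₀ : 0 < t₀ := lt_min ht (by positivity)
      have hsmall : t₀ * ‖d‖ < δ := by
        have h := min_le_right t (δ / (2 * ‖d‖))
        have h1 : t₀ * ‖d‖ ≤ δ / (2 * ‖d‖) * ‖d‖ := mul_le_mul_of_nonneg_right h hdn.le
        have h2 : δ / (2 * ‖d‖) * ‖d‖ = δ / 2 := by field_simp
        linarith
      have hz : dist (y + t₀ • d) y < δ := by
        rw [dist_eq_norm]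
        simpa [norm_smul, abs_of_pos ht₀] using hsmall
      have h1 := hlb (y + t₀ • d) hz
      have hd2 : dist (y + t₀ • d) y = t₀ * ‖d‖ := by
        rw [dist_eq_norm]; simp [norm_smul, abs_of_pos ht₀]
      have hQ0 : -(c * ‖d‖) ≤ Q d t₀ := by
        rw [hQdef]
        simp only
        rw [le_div_iff₀ ht₀]
        rw [hd2] at h1
        nlinarith
      exact hQ0.trans (Qmono d t₀ t ht₀ (min_le_left _ _))
  set Nf : X → ℝ := fun d => sInf (Q d '' Ioi 0) with hNdef
  have hNne : ∀ d, (Q d '' Ioi 0).Nonempty := fun d => ⟨Q d 1, 1, by norm_num, rfl⟩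
  have hNbdd : ∀ d, BddBelow (Q d '' Ioi 0) := by
    intro d
    exact ⟨-(c * ‖d‖), by rintro r ⟨t, ht, rfl⟩; exact Qlb d t ht⟩
  have hN_le : ∀ d t, 0 < t → Nf d ≤ Q d t := fun d t ht => csInf_le (hNbdd d) ⟨t, ht, rfl⟩
  have hN_lb : ∀ d, -(c * ‖d‖) ≤ Nf d := fun d =>
    le_csInf (hNne d) (by rintro r ⟨t, ht, rfl⟩; exact Qlb d t ht)
  have hN1 : ∀ d, Nf d ≤ φ (y + d) - φ y := by
    intro d
    have := hN_le d 1 one_pos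
    simpa [hQdef] using this
  have hN0 : Nf 0 = 0 := by
    refine le_antisymm ?_ (by simpa using hN_lb 0)
    simpa [hQdef] using hN_le 0 1 one_pos
  have hQhom : ∀ (a : ℝ), 0 < a → ∀ d (t : ℝ), 0 < t → Q (a • d) t = a * Q d (t * a) := by
    intro a ha d t ht
    rw [hQdef]
    simp only [smul_smul]
    rw [mul_comm t a]
    field_simp
  have hNhom : ∀ a : ℝ, 0 < a → ∀ d, Nf (a • d) = a * Nf d := by
    intro a ha d
    refine le_antisymm ?_ ?_
    · have h1 : ∀ t : ℝ, 0 < t → Nf (a • d) ≤ a * Q d t := by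
        intro t ht
        have h2 := hN_le (a • d) (t / a) (div_pos ht ha)
        rwa [hQhom a ha d (t / a) (div_pos ht ha), div_mul_cancel₀ _ ha.ne'] at h2
      have h3 : Nf (a • d) / a ≤ Nf d := by
        refine le_csInf (hNne d) ?_
        rintro r ⟨t, ht, rfl⟩
        rw [div_le_iff₀ ha, mul_comm]
        exact h1 t ht
      calc Nf (a • d) = a * (Nf (a • d) / a) := by field_simp
        _ ≤ a * Nf d := mul_le_mul_of_nonneg_left h3 ha.le
    · refine le_csInf (hNne (a • d)) ?_
      rintro r ⟨t, ht, rfl⟩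
      have ht' : (0:ℝ) < t := ht
      rw [hQhom a ha d t ht']
      exact mul_le_mul_of_nonneg_left (hN_le d (t * a) (mul_pos ht' ha)) ha.le
  have hNadd : ∀ d₁ d₂, Nf (d₁ + d₂) ≤ Nf d₁ + Nf d₂ := by
    intro d₁ d₂
    refine le_of_forall_pos_le_add ?_
    intro ε hε
    obtain ⟨r₁, hr₁mem, hr₁⟩ := exists_lt_of_csInf_lt (hNne d₁)
      (lt_add_of_pos_right (Nf d₁) (half_pos hε))
    obtain ⟨r₂, hr₂mem, hr₂⟩ := exists_lt_of_csInf_lt (hNne d₂)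
      (lt_add_of_pos_right (Nf d₂) (half_pos hε))
    obtain ⟨t₁, ht₁, rfl⟩ := hr₁mem
    obtain ⟨t₂, ht₂, rfl⟩ := hr₂mem
    have ht₁' : (0:ℝ) < t₁ := ht₁
    have ht₂' : (0:ℝ) < t₂ := ht₂
    set t : ℝ := min t₁ t₂ / 2 with htdef
    have ht : 0 < t := div_pos (lt_min ht₁' ht₂') two_pos
    have h2t : 2 * t = min t₁ t₂ := by rw [htdef]; ring
    have hmid : Q (d₁ + d₂) t ≤ Q d₁ (2 * t) + Q d₂ (2 * t) := by
      have hpt : y + t • (d₁ + d₂)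
          = (1/2 : ℝ) • (y + (2*t) • d₁) + (1/2 : ℝ) • (y + (2*t) • d₂) := by
        module
      have hA : (0:ℝ) ≤ 1/2 := by norm_num
      have hAB : (1/2 : ℝ) + 1/2 = 1 := by norm_num
      have h := hconv.2 (mem_univ (y + (2*t) • d₁)) (mem_univ (y + (2*t) • d₂)) hA hA hAB
      rw [← hpt] at h
      rw [hQdef]
      simp only
      rw [← add_div, div_le_div_iff₀ ht (by linarith)]
      simp only [smul_eq_mul] at h
      nlinarith [mul_le_mul_of_nonneg_left h (by linarith : (0:ℝ) ≤ 2 * t)]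
    have h1 : Q d₁ (2 * t) ≤ Q d₁ t₁ := Qmono d₁ (2*t) t₁ (by linarith)
      (by rw [h2t]; exact min_le_left _ _)
    have h2 : Q d₂ (2 * t) ≤ Q d₂ t₂ := Qmono d₂ (2*t) t₂ (by linarith)
      (by rw [h2t]; exact min_le_right _ _)
    have := (hN_le (d₁ + d₂) t ht).trans hmid
    linarith
  -- the inf-convolution
  set Mf : X → ℝ := fun d => sInf (Set.range fun a => Nf a + c * ‖d - a‖) with hMdef
  have hMne : ∀ d, (Set.range fun a => Nf a + c * ‖d - a‖).Nonempty := fun d =>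
    Set.range_nonempty _
  have hMbdd : ∀ d, BddBelow (Set.range fun a => Nf a + c * ‖d - a‖) := by
    intro d
    refine ⟨-(c * ‖d‖), ?_⟩
    rintro r ⟨a, rfl⟩
    show -(c * ‖d‖) ≤ Nf a + c * ‖d - a‖
    have h1 : ‖a‖ ≤ ‖d‖ + ‖d - a‖ := by
      simpa using norm_sub_le d (d - a)
    nlinarith [hN_lb a, mul_le_mul_of_nonneg_left h1 hc]
  have hM_le : ∀ d a, Mf d ≤ Nf a + c * ‖d - a‖ := fun d a => csInf_le (hMbdd d) ⟨a, rfl⟩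
  have hM_lb : ∀ d, -(c * ‖d‖) ≤ Mf d := by
    intro d
    refine le_csInf (hMne d) ?_
    rintro r ⟨a, rfl⟩
    show -(c * ‖d‖) ≤ Nf a + c * ‖d - a‖
    have h1 : ‖a‖ ≤ ‖d‖ + ‖d - a‖ := by simpa using norm_sub_le d (d - a)
    nlinarith [hN_lb a, mul_le_mul_of_nonneg_left h1 hc]
  have hM_le_N : ∀ d, Mf d ≤ Nf d := by intro d; simpa using hM_le d d
  have hM_le_norm : ∀ d, Mf d ≤ c * ‖d‖ := by
    intro d
    have := hM_le d 0
    simpa [hN0] using this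
  have hMhom : ∀ a : ℝ, 0 < a → ∀ d, Mf (a • d) = a * Mf d := by
    intro a ha d
    refine le_antisymm ?_ ?_
    · have h1 : ∀ e, Mf (a • d) ≤ a * (Nf e + c * ‖d - e‖) := by
        intro e
        have h2 := hM_le (a • d) (a • e)
        have h3 : ‖a • d - a • e‖ = a * ‖d - e‖ := by
          rw [← smul_sub, norm_smul, Real.norm_eq_abs, abs_of_pos ha]
        rw [h3, hNhom a ha e] at h2
        calc Mf (a • d) ≤ a * Nf e + c * (a * ‖d - e‖) := h2
          _ = a * (Nf e + c * ‖d - e‖) := by ring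
      have h3 : Mf (a • d) / a ≤ Mf d := by
        refine le_csInf (hMne d) ?_
        rintro r ⟨e, rfl⟩
        show Mf (a • d) / a ≤ Nf e + c * ‖d - e‖
        rw [div_le_iff₀ ha, mul_comm]
        exact h1 e
      calc Mf (a • d) = a * (Mf (a • d) / a) := by field_simp
        _ ≤ a * Mf d := mul_le_mul_of_nonneg_left h3 ha.le
    · refine le_csInf (hMne (a • d)) ?_
      rintro r ⟨e, rfl⟩
      show a * Mf d ≤ Nf e + c * ‖a • d - e‖
      have h3 : ‖a • d - e‖ = a * ‖d - a⁻¹ • e‖ := by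
        rw [show a • d - e = a • (d - a⁻¹ • e) by rw [smul_sub, smul_inv_smul₀ ha.ne'],
          norm_smul, Real.norm_eq_abs, abs_of_pos ha]
      have h4 : Nf e = a * Nf (a⁻¹ • e) := by
        rw [← hNhom a ha (a⁻¹ • e), smul_inv_smul₀ ha.ne']
      rw [h3, h4]
      calc a * Mf d ≤ a * (Nf (a⁻¹ • e) + c * ‖d - a⁻¹ • e‖) :=
            mul_le_mul_of_nonneg_left (hM_le d (a⁻¹ • e)) ha.le
        _ = a * Nf (a⁻¹ • e) + c * (a * ‖d - a⁻¹ • e‖) := by ring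
  have hMadd : ∀ d₁ d₂, Mf (d₁ + d₂) ≤ Mf d₁ + Mf d₂ := by
    intro d₁ d₂
    refine le_of_forall_pos_le_add ?_
    intro ε hε
    obtain ⟨r₁, hr₁mem, hr₁⟩ := exists_lt_of_csInf_lt (hMne d₁)
      (lt_add_of_pos_right (Mf d₁) (half_pos hε))
    obtain ⟨r₂, hr₂mem, hr₂⟩ := exists_lt_of_csInf_lt (hMne d₂)
      (lt_add_of_pos_right (Mf d₂) (half_pos hε))
    obtain ⟨a₁, rfl⟩ := hr₁mem
    obtain ⟨a₂, rfl⟩ := hr₂mem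
    simp only at hr₁ hr₂
    have h1 : Mf (d₁ + d₂) ≤ Nf (a₁ + a₂) + c * ‖d₁ + d₂ - (a₁ + a₂)‖ := hM_le _ _
    have h2 : ‖d₁ + d₂ - (a₁ + a₂)‖ ≤ ‖d₁ - a₁‖ + ‖d₂ - a₂‖ := by
      have := norm_add_le (d₁ - a₁) (d₂ - a₂)
      have he : d₁ - a₁ + (d₂ - a₂) = d₁ + d₂ - (a₁ + a₂) := by abel
      rwa [he] at this
    have h3 := hNadd a₁ a₂
    nlinarith [mul_le_mul_of_nonneg_left h2 hc]
  have hM0 : (0:ℝ) ≤ Mf 0 := by simpa using hM_lb 0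
  -- Hahn-Banach
  obtain ⟨g, -, hg⟩ := exists_extension_of_le_sublinear ((0 : X →ₗ[ℝ] ℝ).toPMap ⊥) Mf
    hMhom hMadd (by
      rintro ⟨x, hx⟩
      have hx0 : x = 0 := (Submodule.mem_bot ℝ).1 hx
      simp [LinearMap.toPMap, hx0]
      exact hM0)
  have hgb : ∀ d, ‖g d‖ ≤ c * ‖d‖ := by
    intro d
    rw [Real.norm_eq_abs, abs_le]
    constructor
    · have h1 := (hg (-d)).trans (hM_le_norm (-d))
      rw [map_neg, norm_neg] at h1
      linarith
    · exact (hg d).trans (hM_le_norm d)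
  refine ⟨g.mkContinuous c hgb, fun z => ?_, LinearMap.mkContinuous_norm_le g hc hgb⟩
  have h2 : Nf (z - y) ≤ φ z - φ y := by
    have := hN1 (z - y)
    simpa using this
  exact ((hg (z - y)).trans (hM_le_N (z - y))).trans h2


lemma ekeland_zero
    {X : Type*} [NormedAddCommGroup X] [NormedSpace ℝ X] [CompleteSpace X]
    (ψ : X → ℝ) (hcont : Continuous ψ) (hnn : ∀ z, 0 ≤ ψ z) {c : ℝ} (hc : 0 < c)
    (hdesc : ∀ y, 0 < ψ y → ∃ w, ψ w + c * dist w y < ψ y)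
    (x : X) : ∃ z, ψ z = 0 ∧ c * dist z x ≤ ψ x := by
  classical
  by_contra hcon
  push_neg at hcon
  set R : X → X → Prop := fun u w => ψ u + c * dist u w ≤ ψ w with hR
  have Rrefl : ∀ u, R u u := by intro u; simp [hR]
  have Rtrans : ∀ u v w, R u v → R v w → R u w := by
    intro u v w h1 h2
    have h3 := dist_triangle u v w
    simp only [hR] at *
    nlinarith
  have hApos : ∀ z, R z x → 0 < ψ z := by
    intro z hz
    rcases eq_or_lt_of_le (hnn z) with h | h
    · exfalso
      have h2 := hcon z h.symm
      have h3 : c * dist z x ≤ ψ x := by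
        have := hz
        simp only [hR, ← h] at this
        linarith
      linarith
    · exact h
  have hvne : ∀ w, (ψ '' {u | R u w}).Nonempty := fun w => ⟨ψ w, w, Rrefl w, rfl⟩
  have hvbdd : ∀ w, BddBelow (ψ '' {u | R u w}) := by
    intro w
    exact ⟨0, by rintro r ⟨u, -, rfl⟩; exact hnn u⟩
  set v : X → ℝ := fun w => sInf (ψ '' {u | R u w}) with hv
  have key : ∀ (n : ℕ) (w : X), ∃ u, R u w ∧ ψ u < v w + (1/2)^n := by
    intro n w
    have hlt : v w < v w + (1/2)^n := lt_add_of_pos_right _ (by positivity)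
    obtain ⟨r, ⟨u, hu, rfl⟩, hru⟩ := exists_lt_of_csInf_lt (hvne w) hlt
    exact ⟨u, hu, hru⟩
  choose g hg1 hg2 using key
  set z : ℕ → X := fun n => Nat.rec x (fun n w => g n w) n with hz
  have hz0 : z 0 = x := rfl
  have hzs : ∀ n, z (n+1) = g n (z n) := fun n => rfl
  have hstep : ∀ n, R (z (n+1)) (z n) := fun n => hg1 n (z n)
  have hineq : ∀ n, ψ (z (n+1)) < v (z n) + (1/2)^n := fun n => hg2 n (z n)
  have hchain : ∀ n m, n ≤ m → R (z m) (z n) := by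
    intro n m hnm
    induction m, hnm using Nat.le_induction with
    | base => exact Rrefl _
    | succ m hnm ih => exact Rtrans _ _ _ (hstep m) ih
  have hzx : ∀ n, R (z n) x := fun n => hz0 ▸ hchain 0 n (Nat.zero_le n)
  have hanti : ∀ n m, n ≤ m → ψ (z m) ≤ ψ (z n) := by
    intro n m hnm
    have := hchain n m hnm
    simp only [hR] at this
    nlinarith [dist_nonneg (x := z m) (y := z n)]
  have hdist : ∀ n m, n ≤ m → c * dist (z m) (z n) ≤ ψ (z n) - ψ (z m) := by
    intro n m hnm
    have := hchain n m hnm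
    simp only [hR] at this
    linarith
  -- the sequence is Cauchy
  have hCψ : CauchySeq fun n => ψ (z n) := by
    have hmono : Antitone fun n => ψ (z n) := antitone_nat_of_succ_le fun n =>
      hanti n (n+1) (Nat.le_succ n)
    have hbdd : BddBelow (range fun n => ψ (z n)) := ⟨0, by rintro r ⟨n, rfl⟩; exact hnn _⟩
    exact (tendsto_atTop_ciInf hmono hbdd).cauchySeq
  have hCz : CauchySeq z := by
    rw [Metric.cauchySeq_iff'] at hCψ ⊢
    intro ε hε
    obtain ⟨N, hN⟩ := hCψ (c * ε) (by positivity)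
    refine ⟨N, fun n hn => ?_⟩
    have h1 := hN n hn
    rw [Real.dist_eq, abs_lt] at h1
    have h2 := hdist N n hn
    rw [dist_eq_norm] at *
    nlinarith
  obtain ⟨zlim, hzlim⟩ := cauchySeq_tendsto_of_complete hCz
  have hRlim : ∀ n, R zlim (z n) := by
    intro n
    have hT : Tendsto (fun m => ψ (z m) + c * dist (z m) (z n)) atTop
        (𝓝 (ψ zlim + c * dist zlim (z n))) :=
      ((hcont.tendsto zlim).comp hzlim).add ((hzlim.dist tendsto_const_nhds).const_mul c)
    exact le_of_tendsto hT (eventually_atTop.2 ⟨n, fun m hm => hchain n m hm⟩)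
  have hψpos : 0 < ψ zlim := hApos zlim (hz0 ▸ hRlim 0)
  obtain ⟨w, hw⟩ := hdesc zlim hψpos
  have hRw : R w zlim := le_of_lt hw
  have hRwn : ∀ n, R w (z n) := fun n => Rtrans _ _ _ hRw (hRlim n)
  have hvw : ∀ n, v (z n) ≤ ψ w := fun n => csInf_le (hvbdd (z n)) ⟨w, hRwn n, rfl⟩
  have hlim_le : ∀ n, ψ zlim ≤ ψ (z (n+1)) := by
    intro n
    have := hRlim (n+1)
    simp only [hR] at this
    nlinarith [dist_nonneg (x := zlim) (y := z (n+1))]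
  have hfin : ψ zlim ≤ ψ w := by
    refine le_of_forall_pos_le_add fun ε hε => ?_
    obtain ⟨n, hn⟩ := exists_pow_lt_of_lt_one hε (by norm_num : (1/2 : ℝ) < 1)
    have := (hlim_le n).trans_lt (hineq n)
    have := hvw n
    linarith
  nlinarith [hw, mul_nonneg hc.le (dist_nonneg (x := w) (y := zlim))]


theorem convex_global_error_bound
    {X : Type*} [NormedAddCommGroup X] [NormedSpace ℝ X] [CompleteSpace X]
    (φ : X → ℝ) (hcont : Continuous φ) (hconv : ConvexOn ℝ univ φ)
    (hpos : {x | 0 < φ x}.Nonempty)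
    (S : Set ℝ)
    (hS : S = {r | ∃ x : X, ∃ xs : StrongDual ℝ X, 0 < φ x ∧
      (∀ y, xs (y - x) ≤ φ y - φ x) ∧ r = ‖xs‖})
    (hτ : 0 < sInf S) :
    {x | φ x ≤ 0}.Nonempty ∧
      ∀ x, 0 < φ x → infDist x {y | φ y ≤ 0} ≤ φ x / sInf S := by
  have hSbdd : BddBelow S := by
    refine ⟨0, ?_⟩
    rw [hS]
    rintro r ⟨x, xs, -, -, rfl⟩
    exact norm_nonneg _
  set τ := sInf S with hτdef
  set ψ : X → ℝ := fun z => max (φ z) 0 with hψdef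
  have hψcont : Continuous ψ := hcont.max continuous_const
  have hψnn : ∀ z, 0 ≤ ψ z := fun z => le_max_right _ _
  have key : ∀ c : ℝ, 0 < c → c < τ → ∀ x, ∃ z, φ z ≤ 0 ∧ c * dist z x ≤ ψ x := by
    intro c hc hcτ x
    have hdesc : ∀ y, 0 < ψ y → ∃ w, ψ w + c * dist w y < ψ y := by
      intro y hy
      by_contra hcontra
      push_neg at hcontra
      have hφy : 0 < φ y := by
        rcases le_or_gt (φ y) 0 with h | h
        · exfalso
          rw [hψdef] at hy
          simp only [max_eq_right h] at hy
          exact lt_irrefl 0 hy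
        · exact h
      have hopen : IsOpen {z | 0 < φ z} := isOpen_lt continuous_const hcont
      obtain ⟨δ, hδ, hball⟩ := Metric.isOpen_iff.1 hopen y hφy
      have hlb : ∀ z, dist z y < δ → φ y - c * dist z y ≤ φ z := by
        intro z hz
        have hz1 : 0 < φ z := hball (mem_ball.2 hz)
        have h2 := hcontra z
        rw [hψdef] at h2
        simp only [max_eq_left hφy.le, max_eq_left hz1.le] at h2
        linarith
      obtain ⟨xs, hxs1, hxs2⟩ := exists_subgradient_of_local_lb φ hconv y hc.le hδ hlb
      have hmem : ‖xs‖ ∈ S := by rw [hS]; exact ⟨y, xs, hφy, hxs1, rfl⟩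
      have := csInf_le hSbdd hmem
      rw [← hτdef] at this
      linarith
    obtain ⟨z, hz1, hz2⟩ := ekeland_zero ψ hψcont hψnn hc hdesc x
    refine ⟨z, ?_, hz2⟩
    by_contra h
    push_neg at h
    rw [hψdef] at hz1
    simp only [max_eq_left h.le] at hz1
    exact absurd hz1 (ne_of_gt h)
  constructor
  · obtain ⟨x, hx⟩ := hpos
    obtain ⟨z, hz, -⟩ := key (τ/2) (by positivity) (by linarith) x
    exact ⟨z, hz⟩
  · intro x hx
    have hpsix : ψ x = φ x := max_eq_left hx.le
    have hE : ∀ c : ℝ, 0 < c → c < τ → infDist x {y | φ y ≤ 0} ≤ φ x / c := by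
      intro c hc hcτ
      obtain ⟨z, hz1, hz2⟩ := key c hc hcτ x
      have h3 : infDist x {y | φ y ≤ 0} ≤ dist x z := infDist_le_dist_of_mem hz1
      refine h3.trans ?_
      rw [dist_comm, le_div_iff₀ hc]
      rw [hpsix] at hz2
      linarith
    have htend : Tendsto (fun n : ℕ => φ x / (τ - 1/(n+1))) atTop (𝓝 (φ x / τ)) := by
      have h1 : Tendsto (fun n : ℕ => τ - 1/(n+1)) atTop (𝓝 τ) := by
        simpa using ((tendsto_const_nhds : Tendsto (fun _ : ℕ => τ) atTop (𝓝 τ)).sub tendsto_one_div_add_atTop_nhds_zero_nat)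
      exact tendsto_const_nhds.div h1 (ne_of_gt hτ)
    refine ge_of_tendsto htend ?_
    have hev : ∀ᶠ n : ℕ in atTop, 1/((n:ℝ)+1) < τ :=
      tendsto_one_div_add_atTop_nhds_zero_nat.eventually (gt_mem_nhds hτ)
    filter_upwards [hev] with n hn
    exact hE (τ - 1/(n+1)) (by linarith) (by
      have : (0:ℝ) < 1/((n:ℝ)+1) := by positivity
      linarith)
end

section
/- Let X be a Banach space and φ : X → ℝ ∪ {+∞} a convex lower semicontinuous function, x̄ ∈ dom φ. Then the strong slope |∇φ|(x̄) := limsup_{x→x̄, x≠x̄} (φ(x̄) − φ(x))⁺ / ‖x − x̄‖ equals dist(0*, ∂φ(x̄)) = inf { ‖x*‖ : x* ∈ ∂φ(x̄) } (with the convention inf ∅ = +∞). -/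
/-!
For a subgradient `x*`, the subgradient inequality bounds every difference quotient
`(φ x̄ - φ x) / ‖x - x̄‖` by `‖x*‖`. Conversely, if the slope `s` is finite, convexity makes these
quotients grow as `x` moves towards `x̄` along a segment, so `φ ≥ φ x̄ - s ‖· - x̄‖` everywhere.
Separating the epigraph of `φ` from the open hypograph of this concave cone (Hahn–Banach in
`X × ℝ`) gives a non-vertical affine function between them, whose linear part is a subgradient
of norm at most `s`.
-/

open Metric Set Filter Topology
open scoped ENNReal

theorem exists_affine_between_of_concave_le_convex {E : Type*} [AddCommGroup E] [Module ℝ E]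
    [TopologicalSpace E] [IsTopologicalAddGroup E] [ContinuousSMul ℝ E]
    {D : Set E} {f g : E → ℝ} (hf : ConvexOn ℝ D f) (hg : ConcaveOn ℝ univ g)
    (hgc : Continuous g) (hD : D.Nonempty) (hgf : ∀ x ∈ D, g x ≤ f x) :
    ∃ (ℓ : StrongDual ℝ E) (c : ℝ), (∀ x, g x ≤ ℓ x + c) ∧ ∀ x ∈ D, ℓ x + c ≤ f x := by
  have hopen : IsOpen {p : E × ℝ | p.1 ∈ univ ∧ p.2 < g p.1} := by
    simpa using isOpen_lt continuous_snd (hgc.comp continuous_fst)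
  have hdisj : Disjoint {p : E × ℝ | p.1 ∈ univ ∧ p.2 < g p.1} {p | p.1 ∈ D ∧ f p.1 ≤ p.2} :=
    disjoint_left.2 fun p hlt hle => (hle.2.trans_lt (hlt.2.trans_le (hgf p.1 hle.1))).false
  obtain ⟨F, u, hbelow, habove⟩ :=
    geometric_hahn_banach_open hg.convex_strict_hypograph hopen hf.convex_epigraph hdisj
  set β := F (0, 1)
  have hF : ∀ x c, F (x, c) = F (x, 0) + c * β := fun x c => by
    rw [show (x, c) = (x, 0) + c • ((0 : E), (1 : ℝ)) by simp, map_add, map_smul, smul_eq_mul]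
  obtain ⟨x₀, hx₀⟩ := hD
  -- the separating hyperplane is not vertical: it passes strictly between two points above `x₀`
  have hβ : 0 < β := by
    have h₁ := hbelow (x₀, g x₀ - 1) ⟨trivial, by simp⟩
    have h₂ := habove (x₀, f x₀) ⟨hx₀, le_rfl⟩
    rw [hF] at h₁ h₂
    nlinarith [hgf x₀ hx₀]
  refine ⟨-β⁻¹ • F.comp (ContinuousLinearMap.inl ℝ E ℝ), u / β, fun x => ?_, fun x hx => ?_⟩
  all_goals
    have hval : (-β⁻¹ • F.comp (ContinuousLinearMap.inl ℝ E ℝ)) x + u / β = (u - F (x, 0)) / β := by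
      simp only [ContinuousLinearMap.smul_apply, ContinuousLinearMap.comp_apply,
        ContinuousLinearMap.inl_apply, smul_eq_mul]
      ring
    rw [hval]
  · refine le_of_forall_lt fun c hc => ?_
    have := hbelow (x, c) ⟨trivial, hc⟩
    rw [hF] at this
    rw [lt_div_iff₀ hβ]; linarith
  · have := habove (x, f x) ⟨hx, le_rfl⟩
    rw [hF] at this
    rw [div_le_iff₀ hβ]; linarith

theorem coe_toReal_of_ne_top {α : Type*} {φ : α → EReal} (hbot : ∀ x, φ x ≠ ⊥) {x : α}
    (hx : φ x ≠ ⊤) : φ x = ((φ x).toReal : EReal) :=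
  (EReal.coe_toReal hx (hbot x)).symm

section NormedSpace

variable {X : Type*} [NormedAddCommGroup X] [NormedSpace ℝ X]

theorem concaveOn_sub_mul_norm_sub (a s : ℝ) (hs : 0 ≤ s) (xb : X) :
    ConcaveOn ℝ univ fun x => a - s * ‖x - xb‖ := by
  refine ⟨convex_univ, fun x _ y _ t u ht hu htu => ?_⟩
  have hnorm : ‖t • x + u • y - xb‖ ≤ t * ‖x - xb‖ + u * ‖y - xb‖ := by
    calc ‖t • x + u • y - xb‖ = ‖t • (x - xb) + u • (y - xb)‖ := by
          obtain rfl : u = 1 - t := by linarith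
          congr 1; module
      _ ≤ t * ‖x - xb‖ + u * ‖y - xb‖ := by
          refine (norm_add_le _ _).trans_eq ?_
          rw [norm_smul, norm_smul, Real.norm_of_nonneg ht, Real.norm_of_nonneg hu]
  have ha : a = t * a + u * a := by rw [← add_mul, htu, one_mul]
  simp only [smul_eq_mul]
  nlinarith [mul_le_mul_of_nonneg_left hnorm hs]

theorem ConvexOn.exists_subgradient_norm_le {D : Set X} {f : X → ℝ} (hf : ConvexOn ℝ D f)
    {xb : X} (hxb : xb ∈ D) {s : ℝ} (hs : 0 ≤ s) (hlow : ∀ x ∈ D, f xb - s * ‖x - xb‖ ≤ f x) :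
    ∃ xs : StrongDual ℝ X, ‖xs‖ ≤ s ∧ ∀ x ∈ D, xs (x - xb) ≤ f x - f xb := by
  obtain ⟨ℓ, c, hbelow, habove⟩ := exists_affine_between_of_concave_le_convex hf
    (concaveOn_sub_mul_norm_sub (f xb) s hs xb) (by fun_prop) ⟨xb, hxb⟩ hlow
  have hc : c = f xb - ℓ xb := by
    have := hbelow xb
    have := habove xb hxb
    simp only [sub_self, norm_zero, mul_zero, sub_zero] at *
    linarith
  have haff : ∀ x, ℓ x + c = f xb + ℓ (x - xb) := fun x => by rw [hc, map_sub]; ring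
  refine ⟨ℓ, ℓ.opNorm_le_bound hs fun v => ?_, fun x hx => ?_⟩
  · have h₁ := hbelow (xb + v)
    have h₂ := hbelow (xb - v)
    rw [haff] at h₁ h₂
    simp only [add_sub_cancel_left, sub_sub_cancel_left, norm_neg, map_neg] at h₁ h₂
    rw [Real.norm_eq_abs, abs_le]
    constructor <;> linarith
  · linarith [habove x hx, haff x]

theorem ConvexOn.sub_div_norm_le_of_mem_Ioc {D : Set X} {f : X → ℝ} (hf : ConvexOn ℝ D f)
    {xb x : X} (hxb : xb ∈ D) (hx : x ∈ D) {t : ℝ} (ht : t ∈ Ioc 0 1) :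
    (f xb - f x) / ‖x - xb‖ ≤ (f xb - f (xb + t • (x - xb))) / ‖xb + t • (x - xb) - xb‖ := by
  obtain ⟨ht0, ht1⟩ := ht
  have hseg : f (xb + t • (x - xb)) ≤ t * f x + (1 - t) * f xb := by
    have := hf.2 hx hxb ht0.le (sub_nonneg.2 ht1) (add_sub_cancel t 1)
    rwa [show t • x + (1 - t) • xb = xb + t • (x - xb) by module] at this
  rw [add_sub_cancel_left, norm_smul, Real.norm_of_nonneg ht0.le,
    ← mul_div_mul_left (f xb - f x) _ ht0.ne']
  exact div_le_div_of_nonneg_right (by linarith) (by positivity)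

theorem tendsto_add_smul_nhdsGT_nhdsNE (xb : X) {v : X} (hv : v ≠ 0) :
    Tendsto (fun t : ℝ => xb + t • v) (𝓝[>] 0) (𝓝[≠] xb) := by
  refine tendsto_nhdsWithin_iff.2 ⟨?_, eventually_nhdsWithin_of_forall fun t ht => ?_⟩
  · exact (Continuous.tendsto' (by fun_prop) 0 xb (by simp)).mono_left nhdsWithin_le_nhds
  · simpa [(mem_Ioi.1 ht).ne'] using hv

/-- `ENNReal.ofReal` takes the positive part; a value `φ x = ⊤` contributes `0`, since
`φ xb - ⊤ = ⊥` and `EReal.toReal ⊥ = 0`. -/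
noncomputable def strongSlope (φ : X → EReal) (xb : X) : ℝ≥0∞ :=
  limsup (fun x => ENNReal.ofReal ((φ xb - φ x).toReal / ‖x - xb‖)) (𝓝[≠] xb)

def subdifferential (φ : X → EReal) (xb : X) : Set (StrongDual ℝ X) :=
  {xs | ∀ x, ((xs (x - xb) : ℝ) : EReal) ≤ φ x - φ xb}

section EReal

variable {φ : X → EReal} {xb : X}

theorem convexOn_toReal (hbot : ∀ x, φ x ≠ ⊥)
    (hconv : ∀ x y : X, ∀ t : ℝ, 0 ≤ t → t ≤ 1 →
      φ (t • x + (1 - t) • y) ≤ (t : EReal) * φ x + ((1 - t : ℝ) : EReal) * φ y) :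
    ConvexOn ℝ {x | φ x ≠ ⊤} fun x => (φ x).toReal := by
  have key : ∀ x ∈ {x | φ x ≠ ⊤}, ∀ y ∈ {x | φ x ≠ ⊤}, ∀ t : ℝ, 0 ≤ t → t ≤ 1 →
      φ (t • x + (1 - t) • y) ≤ ((t * (φ x).toReal + (1 - t) * (φ y).toReal : ℝ) : EReal) := by
    intro x hx y hy t ht0 ht1
    have := hconv x y t ht0 ht1
    rwa [coe_toReal_of_ne_top hbot hx, coe_toReal_of_ne_top hbot hy] at this
  have hmem : ∀ x ∈ {x | φ x ≠ ⊤}, ∀ y ∈ {x | φ x ≠ ⊤}, ∀ t : ℝ, 0 ≤ t → t ≤ 1 →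
      φ (t • x + (1 - t) • y) ≠ ⊤ :=
    fun x hx y hy t ht0 ht1 => ne_top_of_le_ne_top (EReal.coe_ne_top _) (key x hx y hy t ht0 ht1)
  refine ⟨fun x hx y hy a b ha hb hab => ?_, fun x hx y hy a b ha hb hab => ?_⟩
  all_goals obtain rfl : b = 1 - a := by linarith
  · exact hmem x hx y hy a ha (by linarith)
  · have := key x hx y hy a ha (by linarith)
    rw [coe_toReal_of_ne_top hbot (hmem x hx y hy a ha (by linarith)), EReal.coe_le_coe_iff] at this
    simpa using this

theorem mem_subdifferential_iff (hbot : ∀ x, φ x ≠ ⊥) (hdom : φ xb ≠ ⊤) {xs : StrongDual ℝ X} :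
    xs ∈ subdifferential φ xb ↔
      ∀ x ∈ {x | φ x ≠ ⊤}, xs (x - xb) ≤ (φ x).toReal - (φ xb).toReal := by
  refine forall_congr' fun x => ?_
  by_cases hx : φ x = ⊤
  · rw [hx, coe_toReal_of_ne_top hbot hdom, EReal.top_sub_coe]
    simp [hx]
  · rw [coe_toReal_of_ne_top hbot hx, coe_toReal_of_ne_top hbot hdom, ← EReal.coe_sub,
      EReal.coe_le_coe_iff]
    simp [hx]

theorem ofReal_sub_div_norm_le_strongSlope (hbot : ∀ x, φ x ≠ ⊥) (hdom : φ xb ≠ ⊤)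
    (hf : ConvexOn ℝ {x | φ x ≠ ⊤} fun x => (φ x).toReal) {x : X} (hx : φ x ≠ ⊤) :
    ENNReal.ofReal (((φ xb).toReal - (φ x).toReal) / ‖x - xb‖) ≤ strongSlope φ xb := by
  rcases eq_or_ne x xb with rfl | hne
  · simp
  refine le_limsup_of_frequently_le' <|
    (tendsto_add_smul_nhdsGT_nhdsNE xb (sub_ne_zero.2 hne)).frequently <|
      Eventually.frequently <| eventually_of_mem (Ioc_mem_nhdsGT one_pos) fun t ht => ?_
  have hy : φ (xb + t • (x - xb)) ≠ ⊤ := hf.1.add_smul_sub_mem hdom hx (Ioc_subset_Icc_self ht)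
  rw [EReal.toReal_sub hdom (hbot xb) hy (hbot _)]
  exact ENNReal.ofReal_le_ofReal (hf.sub_div_norm_le_of_mem_Ioc hdom hx ht)

theorem strongSlope_le_enorm_of_mem_subdifferential (hbot : ∀ x, φ x ≠ ⊥) (hdom : φ xb ≠ ⊤)
    {xs : StrongDual ℝ X} (hxs : xs ∈ subdifferential φ xb) : strongSlope φ xb ≤ ‖xs‖ₑ := by
  refine limsup_le_of_le (by isBoundedDefault) (Eventually.of_forall fun x => ?_)
  rw [← ofReal_norm]
  refine ENNReal.ofReal_le_ofReal (div_le_of_le_mul₀ (norm_nonneg _) (norm_nonneg _) ?_)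
  by_cases hx : φ x = ⊤
  · simp only [hx, EReal.sub_top, EReal.toReal_bot]
    positivity
  rw [EReal.toReal_sub hdom (hbot xb) hx (hbot x)]
  have := (mem_subdifferential_iff hbot hdom).1 hxs x hx
  have h1 := neg_le_abs (xs (x - xb))
  have h2 := xs.le_opNorm (x - xb)
  rw [Real.norm_eq_abs] at h2
  linarith

theorem infEDist_subdifferential_le_strongSlope (hbot : ∀ x, φ x ≠ ⊥) (hdom : φ xb ≠ ⊤)
    (hf : ConvexOn ℝ {x | φ x ≠ ⊤} fun x => (φ x).toReal) :
    infEDist 0 (subdifferential φ xb) ≤ strongSlope φ xb := by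
  by_cases htop : strongSlope φ xb = ⊤
  · rw [htop]; exact le_top
  set s := (strongSlope φ xb).toReal
  have hlow : ∀ x ∈ {x | φ x ≠ ⊤}, (φ xb).toReal - s * ‖x - xb‖ ≤ (φ x).toReal := by
    intro x hx
    rcases eq_or_ne x xb with rfl | hne
    · simp
    have := ofReal_sub_div_norm_le_strongSlope hbot hdom hf hx
    rw [← ENNReal.ofReal_toReal htop, ENNReal.ofReal_le_ofReal_iff ENNReal.toReal_nonneg,
      div_le_iff₀ (norm_pos_iff.2 (sub_ne_zero.2 hne))] at this
    linarith
  obtain ⟨xs, hnorm, hxs⟩ := hf.exists_subgradient_norm_le hdom ENNReal.toReal_nonneg hlow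
  have hmem : xs ∈ subdifferential φ xb := (mem_subdifferential_iff hbot hdom).2 hxs
  calc infEDist 0 (subdifferential φ xb)
      ≤ edist 0 xs := infEDist_le_edist_of_mem hmem
    _ = ‖xs‖ₑ := edist_zero_left xs
    _ ≤ ENNReal.ofReal s := by rw [← ofReal_norm]; exact ENNReal.ofReal_le_ofReal hnorm
    _ = strongSlope φ xb := ENNReal.ofReal_toReal htop

end EReal

end NormedSpace

theorem strong_slope_eq_dist_subdifferential_general
    {X : Type*} [NormedAddCommGroup X] [NormedSpace ℝ X]
    (φ : X → EReal) (xb : X)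
    (hbot : ∀ x, φ x ≠ ⊥) (hdom : φ xb ≠ ⊤)
    (hconv : ∀ x y : X, ∀ t : ℝ, 0 ≤ t → t ≤ 1 →
      φ (t • x + (1 - t) • y) ≤ (t : EReal) * φ x + ((1 - t : ℝ) : EReal) * φ y) :
    limsup (fun x => ENNReal.ofReal ((φ xb - φ x).toReal / ‖x - xb‖)) (𝓝[≠] xb)
      = EMetric.infEdist 0
          {xs : StrongDual ℝ X | ∀ x, ((xs (x - xb) : ℝ) : EReal) ≤ φ x - φ xb} := by
  change strongSlope φ xb = infEDist 0 (subdifferential φ xb)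
  refine le_antisymm ?_ (infEDist_subdifferential_le_strongSlope hbot hdom
    (convexOn_toReal hbot hconv))
  exact le_infEDist.2 fun xs hxs => by
    rw [edist_zero_left]
    exact strongSlope_le_enorm_of_mem_subdifferential hbot hdom hxs

theorem strong_slope_eq_dist_subdifferential
    {X : Type*} [NormedAddCommGroup X] [NormedSpace ℝ X] [CompleteSpace X]
    (φ : X → EReal) (xb : X)
    (hbot : ∀ x, φ x ≠ ⊥) (hdom : φ xb ≠ ⊤)
    (hconv : ∀ x y : X, ∀ t : ℝ, 0 ≤ t → t ≤ 1 →
      φ (t • x + (1 - t) • y) ≤ (t : EReal) * φ x + ((1 - t : ℝ) : EReal) * φ y)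
    (hlsc : LowerSemicontinuous φ) :
    limsup (fun x => ENNReal.ofReal ((φ xb - φ x).toReal / ‖x - xb‖)) (𝓝[≠] xb)
      = EMetric.infEdist 0
          {xs : StrongDual ℝ X | ∀ x, ((xs (x - xb) : ℝ) : EReal) ≤ φ x - φ xb} :=
  strong_slope_eq_dist_subdifferential_general φ xb hbot hdom hconv
end

section
/- Let Ω be a nonempty closed convex subset of a normed space X and x̄ ∈ Ω. Then the subdifferential of the distance function satisfies ∂ dist(·,Ω)(x̄) = N(x̄; Ω) ∩ B*, where N(x̄;Ω) = {x* : ⟨x*, x − x̄⟩ ≤ 0 for all x ∈ Ω} is the normal cone and B* is the closed unit ball of the dual space. -/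
/-! A subgradient of the 1-Lipschitz function `infDist · Ω` has norm at most 1, and it is
nonpositive on `Ω - x̄` because the distance vanishes on `Ω`. Conversely, for such an `f` and
any `w ∈ Ω`, `f (x - x̄) = f (x - w) + f (w - x̄) ≤ ‖x - w‖`; take the infimum over `w`. -/

open Metric Set

open scoped NNReal

section Subgradient

variable {X : Type*} [NormedAddCommGroup X] [NormedSpace ℝ X]

theorem StrongDual.norm_le_of_forall_apply_le {f : StrongDual ℝ X} {C : ℝ} (hC : 0 ≤ C)
    (h : ∀ v, f v ≤ C * ‖v‖) : ‖f‖ ≤ C := by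
  refine f.opNorm_le_bound hC fun v => abs_le.2 ⟨?_, h v⟩
  have := h (-v)
  rw [map_neg, norm_neg] at this
  linarith

theorem LipschitzWith.norm_le_of_isSubgradient {g : X → ℝ} {K : ℝ≥0} (hg : LipschitzWith K g)
    {f : StrongDual ℝ X} {xb : X} (hf : ∀ x, f (x - xb) ≤ g x - g xb) : ‖f‖ ≤ K := by
  refine StrongDual.norm_le_of_forall_apply_le K.coe_nonneg fun v => ?_
  calc f v = f (xb + v - xb) := by rw [add_sub_cancel_left]
    _ ≤ g (xb + v) - g xb := hf _
    _ ≤ dist (g (xb + v)) (g xb) := le_abs_self _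
    _ ≤ K * dist (xb + v) xb := hg.dist_le_mul _ _
    _ = K * ‖v‖ := by rw [dist_eq_norm, add_sub_cancel_left]

theorem apply_sub_le_infDist_of_norm_le_one {Ω : Set X} (hΩ : Ω.Nonempty) {xb : X}
    {f : StrongDual ℝ X} (hN : ∀ w ∈ Ω, f (w - xb) ≤ 0) (hf : ‖f‖ ≤ 1) (x : X) :
    f (x - xb) ≤ infDist x Ω := by
  refine (le_infDist hΩ).2 fun w hw => ?_
  calc f (x - xb) = f (x - w) + f (w - xb) := by rw [← map_add, sub_add_sub_cancel]
    _ ≤ ‖f‖ * ‖x - w‖ + 0 := add_le_add ((le_abs_self _).trans (f.le_opNorm _)) (hN w hw)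
    _ ≤ dist x w := by rw [add_zero, dist_eq_norm]; exact mul_le_of_le_one_left (norm_nonneg _) hf

end Subgradient

theorem subdifferential_of_distance_at_point_of_set_general
    {X : Type*} [NormedAddCommGroup X] [NormedSpace ℝ X]
    (Ω : Set X)
    (xb : X) (hxb : xb ∈ Ω) :
    {f : StrongDual ℝ X | ∀ x, f (x - xb) ≤ infDist x Ω - infDist xb Ω}
      = {f : StrongDual ℝ X | ∀ x ∈ Ω, f (x - xb) ≤ 0} ∩ closedBall 0 1 := by
  ext f
  simp only [mem_ofPred_eq, mem_inter_iff, mem_closedBall, dist_zero_right]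
  constructor
  · intro hf
    refine ⟨fun x hx => ?_, by simpa using (lipschitz_infDist_pt Ω).norm_le_of_isSubgradient hf⟩
    simpa [infDist_zero_of_mem hx, infDist_zero_of_mem hxb] using hf x
  · rintro ⟨hN, hnorm⟩ x
    rw [infDist_zero_of_mem hxb, sub_zero]
    exact apply_sub_le_infDist_of_norm_le_one ⟨xb, hxb⟩ hN hnorm x

theorem subdifferential_of_distance_at_point_of_set
    {X : Type*} [NormedAddCommGroup X] [NormedSpace ℝ X]
    (Ω : Set X) (hne : Ω.Nonempty) (hcl : IsClosed Ω) (hconv : Convex ℝ Ω)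
    (xb : X) (hxb : xb ∈ Ω) :
    {f : StrongDual ℝ X | ∀ x, f (x - xb) ≤ infDist x Ω - infDist xb Ω}
      = {f : StrongDual ℝ X | ∀ x ∈ Ω, f (x - xb) ≤ 0} ∩ closedBall 0 1 :=
  subdifferential_of_distance_at_point_of_set_general Ω xb hxb
end
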